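/- arXiv:2604.19184 — 4 statements merged into one kernel-verified Lean document; each statement's English description precedes it below -/
import Mathlib

section
/- Define u_0(x) = 1 for all x ≥ 0 and u_{k+1} = T u_k. Then for every x ≥ 0 one has the closed form ∑_{k=0}^∞ u_k(x) = 1 + 2 ∫₀ˣ e^{1 − e^{−y}} dy. -/
open MeasureTheory Real

/-- The kernel operator `(Tg)(x) = ∫₀ˣ (e^{−y} + e^{−(x−y)}) g(y) dy`. -/
noncomputable def T (g : ℝ → ℝ) : ℝ → ℝ :=
  fun x => ∫ y in (0:ℝ)..x, (Real.exp (-y) + Real.exp (-(x - y))) * g y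

/-- `u 0 = 1` and `u (k+1) = T (u k)`. -/
noncomputable def u (k : ℕ) : ℝ → ℝ := T^[k] (fun _ => 1)

/-!
The closed form `S x = 1 + 2 ∫₀ˣ exp (1 - exp (-y)) dy` solves `S = 1 + T S`. By linearity
of `T`, `u k = T^k S - T^(k+1) S`, so the partial sums telescope to `S - T^n S`. Since the
kernel is at most `2` on `0 ≤ y ≤ x`, `|T^n g x| ≤ (sup_{[0,x]} |g|) (2x)^n / n!`, which tends
to `0`; the same bound for `g = 1` makes the series absolutely summable.
-/

namespace AgingKernel

open Set Filter Topology Nat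

section KernelOperator

variable {f g : ℝ → ℝ}

lemma T_eq_add (hg : Continuous g) (x : ℝ) :
    T g x =
      (∫ y in (0:ℝ)..x, exp (-y) * g y) + exp (-x) * ∫ y in (0:ℝ)..x, exp y * g y := by
  rw [← intervalIntegral.integral_const_mul, ← intervalIntegral.integral_add
    ((by fun_prop : Continuous fun y => exp (-y) * g y).intervalIntegrable _ _)
    ((by fun_prop : Continuous fun y => exp (-x) * (exp y * g y)).intervalIntegrable _ _)]
  refine intervalIntegral.integral_congr fun y _ => ?_
  rw [show -(x - y) = -x + y by ring, exp_add]
  ring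

lemma continuous_T (hg : Continuous g) : Continuous (T g) := by
  have primitive {h : ℝ → ℝ} (hh : Continuous h) :
      Continuous fun x => ∫ y in (0:ℝ)..x, h y :=
    intervalIntegral.continuous_primitive (fun _ _ => hh.intervalIntegrable _ _) 0
  rw [funext (T_eq_add hg)]
  exact (primitive (by fun_prop)).add ((by fun_prop : Continuous fun x => exp (-x)).mul
    (primitive (by fun_prop)))

lemma continuous_iterate_T (hg : Continuous g) (n : ℕ) : Continuous (T^[n] g) := by
  induction n with
  | zero => exact hg
  | succ n ih => rw [Function.iterate_succ_apply']; exact continuous_T ih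

lemma T_sub (hf : Continuous f) (hg : Continuous g) : T (f - g) = T f - T g := by
  funext x
  simp only [T, Pi.sub_apply, mul_sub]
  exact intervalIntegral.integral_sub ((by fun_prop : Continuous _).intervalIntegrable _ _)
    ((by fun_prop : Continuous _).intervalIntegrable _ _)

lemma iterate_T_sub (hf : Continuous f) (hg : Continuous g) (n : ℕ) :
    T^[n] (f - g) = T^[n] f - T^[n] g := by
  induction n with
  | zero => rfl
  | succ n ih =>
    simp only [Function.iterate_succ_apply', ih]
    exact T_sub (continuous_iterate_T hf n) (continuous_iterate_T hg n)

lemma abs_T_le (hg : Continuous g) {x C : ℝ} {k : ℕ} (hx : 0 ≤ x)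
    (h : ∀ y ∈ Icc 0 x, |g y| ≤ C * (2 * y) ^ k / k !) :
    |T g x| ≤ C * (2 * x) ^ (k + 1) / (k + 1)! := by
  calc |T g x| ≤ ∫ y in (0:ℝ)..x, |(exp (-y) + exp (-(x - y))) * g y| :=
        intervalIntegral.abs_integral_le_integral_abs hx
    _ ≤ ∫ y in (0:ℝ)..x, 2 * (C * (2 * y) ^ k / k !) := by
        refine intervalIntegral.integral_mono_on hx
          ((by fun_prop : Continuous _).intervalIntegrable _ _)
          ((by fun_prop : Continuous _).intervalIntegrable _ _) fun y hy => ?_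
        have hkernel : |exp (-y) + exp (-(x - y))| ≤ 2 := by
          rw [abs_of_pos (by positivity)]
          linarith [exp_le_one_iff.2 (neg_nonpos.2 hy.1),
            exp_le_one_iff.2 (by linarith [hy.2] : -(x - y) ≤ 0)]
        rw [abs_mul]
        exact mul_le_mul hkernel (h y hy) (abs_nonneg _) zero_le_two
    _ = C * (2 * x) ^ (k + 1) / (k + 1)! := by
        simp only [mul_pow, mul_div_assoc, ← mul_assoc]
        rw [intervalIntegral.integral_const_mul, intervalIntegral.integral_div, integral_pow,
          Nat.factorial_succ]
        push_cast
        field_simp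
        ring

lemma abs_iterate_T_le (hg : Continuous g) {b C : ℝ} (h : ∀ y ∈ Icc 0 b, |g y| ≤ C)
    (n : ℕ) :
    ∀ y ∈ Icc 0 b, |T^[n] g y| ≤ C * (2 * y) ^ n / n ! := by
  induction n with
  | zero => simpa using h
  | succ n ih =>
    intro y hy
    rw [Function.iterate_succ_apply']
    exact abs_T_le (continuous_iterate_T hg n) hy.1
      fun z hz => ih z ⟨hz.1, hz.2.trans hy.2⟩

end KernelOperator

noncomputable def phi (y : ℝ) : ℝ := exp (1 - exp (-y))

noncomputable def Phi (x : ℝ) : ℝ := ∫ y in (0:ℝ)..x, phi y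

noncomputable def closedForm (x : ℝ) : ℝ := 1 + 2 * Phi x

@[fun_prop]
lemma continuous_phi : Continuous phi := by unfold phi; fun_prop

lemma hasDerivAt_phi (y : ℝ) : HasDerivAt phi (phi y * exp (-y)) y := by
  unfold phi
  convert ((hasDerivAt_neg y).exp.const_sub 1).exp using 1
  ring

lemma hasDerivAt_Phi (x : ℝ) : HasDerivAt Phi (phi x) x :=
  (continuous_phi.integral_hasStrictDerivAt 0 x).hasDerivAt

@[fun_prop]
lemma continuous_closedForm : Continuous closedForm :=
  continuous_const.add (continuous_const.mul
    (continuous_iff_continuousAt.2 fun x => (hasDerivAt_Phi x).continuousAt))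

lemma T_closedForm (x : ℝ) : T closedForm x = closedForm x - 1 := by
  have hexp (y : ℝ) := (hasDerivAt_neg y).exp
  have hinv (y : ℝ) : exp y * exp (-y) = 1 := by rw [← exp_add, add_neg_cancel, exp_zero]
  -- antiderivatives of `exp (∓y) * closedForm y`, found using `phi' = phi * exp (-y)`
  have hleft : ∫ y in (0:ℝ)..x, exp (-y) * closedForm y
      = (-exp (-x) + 2 * (phi x - exp (-x) * Phi x)) - 1 := by
    rw [intervalIntegral.integral_eq_sub_of_hasDerivAt
      (f := fun y => -exp (-y) + 2 * (phi y - exp (-y) * Phi y))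
      (fun y _ => ((hexp y).neg.add (((hasDerivAt_phi y).sub
        ((hexp y).mul (hasDerivAt_Phi y))).const_mul 2)).congr_deriv
          (by unfold closedForm; ring))
      ((by fun_prop : Continuous fun y => exp (-y) * closedForm y).intervalIntegrable _ _)]
    norm_num [phi, Phi]
  have hright : ∫ y in (0:ℝ)..x, exp y * closedForm y
      = (exp x + 2 * (exp x * Phi x - exp x * phi x + Phi x)) + 1 := by
    rw [intervalIntegral.integral_eq_sub_of_hasDerivAt
      (f := fun y => exp y + 2 * (exp y * Phi y - exp y * phi y + Phi y))
      (fun y _ => ((hasDerivAt_exp y).add (((((hasDerivAt_exp y).mul (hasDerivAt_Phi y)).sub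
        ((hasDerivAt_exp y).mul (hasDerivAt_phi y))).add (hasDerivAt_Phi y)).const_mul
          2)).congr_deriv (by unfold closedForm; linear_combination (-2 * phi y) * hinv y))
      ((by fun_prop : Continuous fun y => exp y * closedForm y).intervalIntegrable _ _)]
    norm_num [phi, Phi]
  rw [T_eq_add continuous_closedForm, hleft, hright, closedForm]
  linear_combination (1 + 2 * Phi x - 2 * phi x) * hinv x

lemma u_eq_sub (k : ℕ) : u k = T^[k] closedForm - T^[k + 1] closedForm := by
  have hone : closedForm - T closedForm = fun _ => 1 := by
    funext x; simp [T_closedForm]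
  rw [u, ← hone, iterate_T_sub continuous_closedForm (continuous_T continuous_closedForm),
    Function.iterate_succ_apply]

lemma sum_range_u (n : ℕ) (x : ℝ) :
    ∑ k ∈ Finset.range n, u k x = closedForm x - T^[n] closedForm x := by
  simp only [u_eq_sub, Pi.sub_apply]
  exact Finset.sum_range_sub' _ n

lemma abs_closedForm_le {x y : ℝ} (hy : y ∈ Icc 0 x) : |closedForm y| ≤ closedForm x := by
  have hPhi_nonneg : 0 ≤ Phi y := intervalIntegral.integral_nonneg hy.1 fun z _ => (exp_pos _).le
  have hPhi_le : Phi y ≤ Phi x := intervalIntegral.integral_mono_interval le_rfl hy.1 hy.2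
    (Eventually.of_forall fun z => (exp_pos _).le) (continuous_phi.intervalIntegrable _ _)
  rw [abs_of_nonneg (by unfold closedForm; linarith)]
  unfold closedForm; linarith

end AgingKernel

open AgingKernel Filter

theorem stmt_2 (x : ℝ) (hx : 0 ≤ x) :
    Summable (fun k : ℕ => u k x) ∧
    (∑' k : ℕ, u k x) = 1 + 2 * ∫ y in (0:ℝ)..x, Real.exp (1 - Real.exp (-y)) := by
  have hx' : x ∈ Set.Icc 0 x := ⟨hx, le_rfl⟩
  have hsum : Summable (fun k : ℕ => u k x) :=
    .of_norm_bounded (summable_pow_div_factorial (2 * x)) fun k => by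
      simpa [u] using abs_iterate_T_le continuous_const (C := 1) (fun _ _ => by simp) k x hx'
  have hrem : Tendsto (fun n => T^[n] closedForm x) atTop (nhds 0) := by
    refine squeeze_zero_norm (fun n => abs_iterate_T_le continuous_closedForm
      (fun y hy => abs_closedForm_le hy) n x hx') ?_
    simpa [mul_div_assoc] using (FloorSemiring.tendsto_pow_div_factorial_atTop (2 * x)).const_mul
      (closedForm x)
  have hpartial :
      Tendsto (fun n => ∑ k ∈ Finset.range n, u k x) atTop (nhds (closedForm x)) := by
    simpa [sum_range_u] using hrem.const_sub (closedForm x)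
  exact ⟨hsum, tendsto_nhds_unique hsum.hasSum.tendsto_sum_nat hpartial⟩
end

section
/- Define u_0(x) = 1 for all x ≥ 0 and u_{k+1} = T u_k. Then for every x ≥ 0 one has ∑_{k=1}^∞ u_k(x) ≤ 2 e x, where e is Euler's number. -/
open MeasureTheory Real

/-! The partial sums `Sₙ = ∑_{k=1}^n u_k` satisfy `Sₙ₊₁ = T (1 + Sₙ)`, and `T` is monotone on
`[0, x]` because its kernel is positive. Hence `Sₙ ≤ F` for every nonnegative `F` with
`T (1 + F) ≤ F`. Differentiating `g = T (1 + g)` twice gives `g'' = e^{-x} g'` with `g'(0) = 2`, so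
`F x = ∫₀ˣ 2 e^{1 - e^{-t}} dt` is an exact fixed point, and `e^{1 - e^{-t}} ≤ e` gives
`F x ≤ 2 e x`. -/

lemma continuous_T {g : ℝ → ℝ} (hg : Continuous g) : Continuous (T g) :=
  intervalIntegral.continuous_parametric_intervalIntegral_of_continuous
    (f := fun x y => (exp (-y) + exp (-(x - y))) * g y) (by fun_prop) continuous_id

lemma T_finsetSum {ι : Type*} (s : Finset ι) {f : ι → ℝ → ℝ} (hf : ∀ i ∈ s, Continuous (f i))
    (x : ℝ) : T (∑ i ∈ s, f i) x = ∑ i ∈ s, T (f i) x := by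
  simp only [T, Finset.sum_apply, Finset.mul_sum]
  exact intervalIntegral.integral_finsetSum fun i hi =>
    ((by fun_prop : Continuous fun y => exp (-y) + exp (-(x - y))).mul
      (hf i hi)).intervalIntegrable _ _

lemma T_mono {g h : ℝ → ℝ} (hg : Continuous g) (hh : Continuous h) {x : ℝ} (hx : 0 ≤ x)
    (hgh : ∀ y ∈ Set.Icc 0 x, g y ≤ h y) : T g x ≤ T h x :=
  intervalIntegral.integral_mono_on hx
    ((Continuous.mul (by fun_prop) hg).intervalIntegrable 0 x)
    ((Continuous.mul (by fun_prop) hh).intervalIntegrable 0 x)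
    fun y hy => mul_le_mul_of_nonneg_left (hgh y hy) (by positivity)

lemma T_nonneg {g : ℝ → ℝ} {x : ℝ} (hx : 0 ≤ x) (hg : ∀ y ∈ Set.Icc 0 x, 0 ≤ g y) :
    0 ≤ T g x :=
  intervalIntegral.integral_nonneg hx fun y hy => mul_nonneg (by positivity) (hg y hy)

lemma u_succ (k : ℕ) : u (k + 1) = T (u k) :=
  Function.iterate_succ_apply' T k _

lemma continuous_u (k : ℕ) : Continuous (u k) := by
  induction k with
  | zero => exact continuous_const
  | succ k ih => rw [u_succ]; exact continuous_T ih

lemma u_nonneg (k : ℕ) {x : ℝ} (hx : 0 ≤ x) : 0 ≤ u k x := by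
  induction k generalizing x with
  | zero => exact zero_le_one
  | succ k ih => rw [u_succ]; exact T_nonneg hx fun y hy => ih hy.1

lemma sum_range_succ_u_succ (n : ℕ) (x : ℝ) :
    ∑ k ∈ Finset.range (n + 1), u (k + 1) x =
      T (fun y => 1 + ∑ k ∈ Finset.range n, u (k + 1) y) x := by
  have hsum :
      (fun y => 1 + ∑ k ∈ Finset.range n, u (k + 1) y) = ∑ k ∈ Finset.range (n + 1), u k := by
    ext y
    rw [Finset.sum_apply, Finset.sum_range_succ']
    simp only [u, Function.iterate_zero, id_eq, add_comm]
  rw [hsum, T_finsetSum _ (fun k _ => continuous_u k)]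
  simp only [u_succ]

lemma sum_range_u_succ_le_of_T_le {F : ℝ → ℝ} (hF : Continuous F)
    (hF_nonneg : ∀ x, 0 ≤ x → 0 ≤ F x) (hT : ∀ x, 0 ≤ x → T (fun y => 1 + F y) x ≤ F x)
    (n : ℕ) {x : ℝ} (hx : 0 ≤ x) : ∑ k ∈ Finset.range n, u (k + 1) x ≤ F x := by
  induction n generalizing x with
  | zero => simpa using hF_nonneg x hx
  | succ n ih =>
    rw [sum_range_succ_u_succ]
    have hS : Continuous fun y => 1 + ∑ k ∈ Finset.range n, u (k + 1) y :=
      continuous_const.add (continuous_finsetSum _ fun k _ => continuous_u (k + 1))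
    exact (T_mono hS (by fun_prop) hx fun y hy => (add_le_add_iff_left 1).2 (ih hy.1)).trans
      (hT x hx)

noncomputable def majorant (x : ℝ) : ℝ :=
  ∫ t in (0 : ℝ)..x, 2 * exp (1 - exp (-t))

lemma hasDerivAt_majorant (x : ℝ) : HasDerivAt majorant (2 * exp (1 - exp (-x))) x :=
  ((by fun_prop : Continuous fun t => 2 * exp (1 - exp (-t))).integral_hasStrictDerivAt
    0 x).hasDerivAt

lemma continuous_majorant : Continuous majorant :=
  continuous_iff_continuousAt.2 fun x => (hasDerivAt_majorant x).continuousAt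

lemma majorant_nonneg {x : ℝ} (hx : 0 ≤ x) : 0 ≤ majorant x :=
  intervalIntegral.integral_nonneg hx fun _ _ => by positivity

lemma majorant_le {x : ℝ} (hx : 0 ≤ x) : majorant x ≤ 2 * exp 1 * x := by
  have hle : majorant x ≤ ∫ _ in (0 : ℝ)..x, 2 * exp 1 :=
    intervalIntegral.integral_mono_on hx
      ((by fun_prop : Continuous fun t => 2 * exp (1 - exp (-t))).intervalIntegrable 0 x)
      intervalIntegrable_const fun t _ => by gcongr; linarith [exp_pos (-t)]
  rwa [intervalIntegral.integral_const, smul_eq_mul, sub_zero, mul_comm] at hle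

lemma T_one_add_majorant (x : ℝ) : T (fun y => 1 + majorant y) x = majorant x := by
  set φ : ℝ → ℝ := fun y => 2 * exp (1 - exp (-y))
  have hφ (y : ℝ) : HasDerivAt φ (φ y * exp (-y)) y := by
    simpa [φ, mul_assoc] using
      ((((hasDerivAt_neg y).exp).const_sub 1).exp).const_mul 2
  set G : ℝ → ℝ := fun y => -exp (-y) * (1 + majorant y) + φ y +
    exp (-x) * (exp y * (1 + majorant y) - exp y * φ y + majorant y)
  have hG (y : ℝ) : HasDerivAt G ((exp (-y) + exp (-(x - y))) * (1 + majorant y)) y := by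
    have hM := (hasDerivAt_majorant y).const_add 1
    have h := ((((hasDerivAt_neg y).exp.neg).mul hM).add (hφ y)).add
      (((((hasDerivAt_exp y).mul hM).sub ((hasDerivAt_exp y).mul (hφ y))).add
        (hasDerivAt_majorant y)).const_mul (exp (-x)))
    refine h.congr_deriv ?_
    simp only [φ, Pi.neg_apply, neg_sub, exp_sub, exp_neg]
    field_simp
    ring
  have hFTC := intervalIntegral.integral_eq_sub_of_hasDerivAt (fun y _ => hG y)
    ((by fun_prop : Continuous fun y => exp (-y) + exp (-(x - y))).mul
      (continuous_majorant.const_add 1) |>.intervalIntegrable 0 x)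
  have h0 : majorant 0 = 0 := intervalIntegral.integral_same
  rw [show T (fun y => 1 + majorant y) x = G x - G 0 from hFTC]
  simp only [G, φ, h0, exp_neg, exp_zero, inv_one, sub_self]
  field_simp
  ring

theorem stmt_3 (x : ℝ) (hx : 0 ≤ x) :
    Summable (fun k : ℕ => u (k + 1) x) ∧
    (∑' k : ℕ, u (k + 1) x) ≤ 2 * Real.exp 1 * x := by
  have hnonneg : ∀ k, 0 ≤ u (k + 1) x := fun k => u_nonneg (k + 1) hx
  have hbound : ∀ n, ∑ k ∈ Finset.range n, u (k + 1) x ≤ 2 * exp 1 * x := fun n =>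
    (sum_range_u_succ_le_of_T_le continuous_majorant (fun _ => majorant_nonneg)
      (fun y _ => (T_one_add_majorant y).le) n hx).trans (majorant_le hx)
  exact ⟨summable_of_sum_range_le hnonneg hbound, tsum_le_of_sum_range_le hnonneg hbound⟩
end

section
/- For all real L > 0, ℓ > 0 and 0 < ε ≤ Lℓ one has ∫₀^ℓ e^{−x} (1 − e^{−min(L, ε/x)}) dx ≤ (1 − e^{−L})(1 − e^{−ε/L}) + min(ℓ, ε) + min(ε, 1)·(log(1 + 1/ε) + 1). -/
/-!
On `x > 0` the integrand is at most `1`, at most `e^{-x}`, and (since `1 - e^{-t} ≤ t`)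
at most `ε / x`, and `ε e^{-x}` for `x ≥ 1`. Integrating `1` over `[0, min ℓ ε]`, then
`ε / x` over `[ε, 1]` (giving `ε log (1/ε)`) and `ε e^{-x}` over `[1, ∞)` when `ε < 1`,
or `e^{-x}` over `[ε, ∞)` when `ε ≥ 1`, bounds the integral by
`min ℓ ε + min ε 1 * (log (1 + 1/ε) + 1)`; the remaining summand
`(1 - e^{-L}) (1 - e^{-ε/L})` is nonnegative.
-/

open MeasureTheory Real intervalIntegral

lemma Real.one_sub_exp_neg_nonneg {t : ℝ} (ht : 0 ≤ t) : 0 ≤ 1 - exp (-t) := by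
  linarith [exp_le_one_iff.2 (neg_nonpos.2 ht)]

/-- The integrand of `b(L, ℓ, ε)`. -/
noncomputable def bIntegrand (L ε x : ℝ) : ℝ := exp (-x) * (1 - exp (-min L (ε / x)))

section bIntegrand

variable {L ε : ℝ}

lemma one_sub_exp_neg_min_le_div (L ε x : ℝ) : 1 - exp (-min L (ε / x)) ≤ ε / x := by
  linarith [add_one_le_exp (-min L (ε / x)), min_le_right L (ε / x)]

lemma bIntegrand_nonneg (hL : 0 ≤ L) (hε : 0 ≤ ε) {x : ℝ} (hx : 0 ≤ x) :
    0 ≤ bIntegrand L ε x :=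
  mul_nonneg (exp_pos _).le (one_sub_exp_neg_nonneg (le_min hL (div_nonneg hε hx)))

lemma bIntegrand_le_exp_neg (L ε x : ℝ) : bIntegrand L ε x ≤ exp (-x) :=
  mul_le_of_le_one_right (exp_pos _).le (by linarith [exp_pos (-min L (ε / x))])

lemma bIntegrand_le_one {x : ℝ} (hx : 0 ≤ x) : bIntegrand L ε x ≤ 1 :=
  (bIntegrand_le_exp_neg L ε x).trans (exp_le_one_iff.2 (by linarith))

lemma bIntegrand_le_div (hL : 0 ≤ L) (hε : 0 ≤ ε) {x : ℝ} (hx : 0 ≤ x) :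
    bIntegrand L ε x ≤ ε / x :=
  (mul_le_of_le_one_left (one_sub_exp_neg_nonneg (le_min hL (div_nonneg hε hx)))
    (exp_le_one_iff.2 (by linarith))).trans (one_sub_exp_neg_min_le_div L ε x)

lemma bIntegrand_le_mul_exp_neg (hε : 0 ≤ ε) {x : ℝ} (hx : 1 ≤ x) :
    bIntegrand L ε x ≤ ε * exp (-x) := by
  rw [bIntegrand, mul_comm ε]
  gcongr
  exact (one_sub_exp_neg_min_le_div L ε x).trans (div_le_self hε hx)

lemma measurable_bIntegrand (L ε : ℝ) : Measurable (bIntegrand L ε) := by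
  unfold bIntegrand
  fun_prop

lemma intervalIntegrable_bIntegrand (hL : 0 ≤ L) (hε : 0 ≤ ε) {a b : ℝ} (ha : 0 ≤ a)
    (hb : 0 ≤ b) : IntervalIntegrable (bIntegrand L ε) volume a b := by
  refine (intervalIntegrable_const (c := (1 : ℝ))).mono_fun'
    (measurable_bIntegrand L ε).aestronglyMeasurable ?_
  filter_upwards [ae_restrict_mem measurableSet_uIoc] with x hx
  have hx0 : 0 ≤ x := (le_min ha hb).trans hx.1.le
  rw [Real.norm_of_nonneg (bIntegrand_nonneg hL hε hx0)]
  exact bIntegrand_le_one hx0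

variable {a b : ℝ}

lemma integral_bIntegrand_le_sub (hL : 0 ≤ L) (hε : 0 ≤ ε) (ha : 0 ≤ a) (hab : a ≤ b) :
    ∫ x in a..b, bIntegrand L ε x ≤ b - a := by
  calc ∫ x in a..b, bIntegrand L ε x
      ≤ ∫ _ in a..b, (1 : ℝ) :=
        integral_mono_on hab (intervalIntegrable_bIntegrand hL hε ha (ha.trans hab))
          intervalIntegrable_const fun x hx ↦ bIntegrand_le_one (ha.trans hx.1)
    _ = b - a := by simp

lemma integral_bIntegrand_le_exp_neg (hL : 0 ≤ L) (hε : 0 ≤ ε) (ha : 0 ≤ a)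
    (hab : a ≤ b) :
    ∫ x in a..b, bIntegrand L ε x ≤ exp (-a) := by
  calc ∫ x in a..b, bIntegrand L ε x
      ≤ ∫ x in a..b, exp (-x) :=
        integral_mono_on hab (intervalIntegrable_bIntegrand hL hε ha (ha.trans hab))
          ((continuous_exp.comp continuous_neg).intervalIntegrable a b)
          fun x _ ↦ bIntegrand_le_exp_neg L ε x
    _ = exp (-a) - exp (-b) := by
        rw [intervalIntegral.integral_comp_neg (fun x ↦ exp x), integral_exp]
    _ ≤ exp (-a) := by linarith [exp_pos (-b)]

lemma integral_bIntegrand_le_mul_log (hL : 0 ≤ L) (hε : 0 ≤ ε) (ha : 0 < a) (hab : a ≤ b) :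
    ∫ x in a..b, bIntegrand L ε x ≤ ε * log (b / a) := by
  have hb : 0 < b := ha.trans_le hab
  calc ∫ x in a..b, bIntegrand L ε x
      ≤ ∫ x in a..b, ε * x⁻¹ :=
        integral_mono_on hab (intervalIntegrable_bIntegrand hL hε ha.le hb.le)
          ((intervalIntegrable_inv (fun x hx ↦ (ha.trans_le (Set.uIcc_of_le hab ▸ hx).1).ne')
            continuousOn_id).const_mul ε)
          fun x hx ↦ bIntegrand_le_div hL hε (ha.le.trans hx.1)
    _ = ε * log (b / a) := by rw [intervalIntegral.integral_const_mul, integral_inv_of_pos ha hb]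

lemma integral_bIntegrand_le_mul (hL : 0 ≤ L) (hε : 0 ≤ ε) (ha : 1 ≤ a) (hab : a ≤ b) :
    ∫ x in a..b, bIntegrand L ε x ≤ ε := by
  have ha0 : 0 ≤ a := zero_le_one.trans ha
  calc ∫ x in a..b, bIntegrand L ε x
      ≤ ∫ x in a..b, ε * exp (-x) :=
        integral_mono_on hab (intervalIntegrable_bIntegrand hL hε ha0 (ha0.trans hab))
          ((continuous_exp.comp continuous_neg).const_mul ε |>.intervalIntegrable a b)
          fun x hx ↦ bIntegrand_le_mul_exp_neg hε (ha.trans hx.1)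
    _ = ε * (exp (-a) - exp (-b)) := by
        rw [intervalIntegral.integral_const_mul,
          intervalIntegral.integral_comp_neg (fun x ↦ exp x), integral_exp]
    _ ≤ ε * 1 := by gcongr; linarith [exp_pos (-b), exp_le_one_iff.2 (by linarith : -a ≤ 0)]
    _ = ε := mul_one ε

lemma integral_bIntegrand_tail_le (hL : 0 ≤ L) (hε : 0 < ε) (hb : ε ≤ b) :
    ∫ x in ε..b, bIntegrand L ε x ≤ min ε 1 * (log (1 + 1 / ε) + 1) := by
  have hlog : log (1 / ε) ≤ log (1 + 1 / ε) := log_le_log (by positivity) (by linarith)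
  rcases le_or_gt 1 ε with h1 | h1
  · rw [min_eq_right h1, one_mul]
    linarith [integral_bIntegrand_le_exp_neg hL hε.le hε.le hb,
      exp_le_one_iff.2 (neg_nonpos.2 hε.le),
      log_nonneg (le_add_of_nonneg_right (by positivity) : (1 : ℝ) ≤ 1 + 1 / ε)]
  · rw [min_eq_left h1.le]
    have hc : 1 ≤ max b 1 := le_max_right b 1
    calc ∫ x in ε..b, bIntegrand L ε x
        ≤ ∫ x in ε..max b 1, bIntegrand L ε x :=
          integral_mono_interval le_rfl hb (le_max_left b 1) ?_
            (intervalIntegrable_bIntegrand hL hε.le hε.le (zero_le_one.trans hc))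
      _ = (∫ x in ε..1, bIntegrand L ε x) + ∫ x in 1..max b 1, bIntegrand L ε x :=
          (integral_add_adjacent_intervals
            (intervalIntegrable_bIntegrand hL hε.le hε.le zero_le_one)
            (intervalIntegrable_bIntegrand hL hε.le zero_le_one (zero_le_one.trans hc))).symm
      _ ≤ ε * log (1 / ε) + ε :=
          add_le_add (integral_bIntegrand_le_mul_log hL hε.le hε h1.le)
            (integral_bIntegrand_le_mul hL hε.le le_rfl hc)
      _ ≤ ε * (log (1 + 1 / ε) + 1) := by nlinarith
    filter_upwards [ae_restrict_mem measurableSet_Ioc] with x hx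
    exact bIntegrand_nonneg hL hε.le (hε.le.trans hx.1.le)

end bIntegrand

theorem stmt_7_general (L ℓ ε : ℝ) (hL : 0 < L) (hl : 0 < ℓ) (hε : 0 < ε) :
    (∫ x in (0:ℝ)..ℓ, Real.exp (-x) * (1 - Real.exp (-(min L (ε / x))))) ≤
      (1 - Real.exp (-L)) * (1 - Real.exp (-(ε / L))) + min ℓ ε +
        min ε 1 * (Real.log (1 + 1 / ε) + 1) := by
  change ∫ x in (0:ℝ)..ℓ, bIntegrand L ε x ≤ _
  have hfirst : 0 ≤ (1 - exp (-L)) * (1 - exp (-(ε / L))) :=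
    mul_nonneg (one_sub_exp_neg_nonneg hL.le) (one_sub_exp_neg_nonneg (by positivity))
  rcases le_or_gt ℓ ε with hle | hlt
  · have hlog : 0 ≤ log (1 + 1 / ε) := log_nonneg (by linarith [one_div_pos.2 hε])
    have htail : 0 ≤ min ε 1 * (log (1 + 1 / ε) + 1) :=
      mul_nonneg (le_min hε.le zero_le_one) (by linarith)
    rw [min_eq_left hle]
    linarith [integral_bIntegrand_le_sub hL.le hε.le le_rfl hl.le]
  · rw [min_eq_right hlt.le, ← integral_add_adjacent_intervals
      (intervalIntegrable_bIntegrand hL.le hε.le le_rfl hε.le)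
      (intervalIntegrable_bIntegrand hL.le hε.le hε.le hl.le)]
    linarith [integral_bIntegrand_le_sub hL.le hε.le le_rfl hε.le,
      integral_bIntegrand_tail_le hL.le hε hlt.le]

theorem stmt_7 (L ℓ ε : ℝ) (hL : 0 < L) (hl : 0 < ℓ) (hε : 0 < ε) (hεL : ε ≤ L * ℓ) :
    (∫ x in (0:ℝ)..ℓ, Real.exp (-x) * (1 - Real.exp (-(min L (ε / x))))) ≤
      (1 - Real.exp (-L)) * (1 - Real.exp (-(ε / L))) + min ℓ ε +
        min ε 1 * (Real.log (1 + 1 / ε) + 1) :=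
  stmt_7_general L ℓ ε hL hl hε
end

section
/- For every t ≥ 0 let p_t = e^{−t} δ_t + μ_t, where μ_t has density a ↦ e^{−a} 1_{[0,t)}(a) with respect to Lebesgue measure on ℝ. Then for every continuously differentiable φ : ℝ² → ℝ with compact support, − ∫₀^∞ ∫_ℝ ∂_t φ(t,a) p_t(da) dt = φ(0,0) + ∫₀^∞ ∫_ℝ ∂_a φ(s,a) p_s(da) ds + ∫₀^∞ ( φ(s,0) − ∫_ℝ φ(s,a) p_s(da) ) ds; that is, p_t is a weak solution of the continuity equation ∂_t p_t + ∂_a p_t = −p_t + (∫_ℝ p_t(da)) δ_0 with initial condition p_0 = δ_0. -/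
/-!
Splitting `p_t` into its atom `e^{-t} δ_t` and its absolutely continuous part turns every integral
against `p_t` into a term on the diagonal `a = t` plus an integral over the triangle `0 ≤ a < t`.
On the left, Fubini over the triangle and the fundamental theorem of calculus in `t` turn the
triangle term into `-∫ e^{-t} φ(t,t) dt`. On the right, integrating `e^{-a} ∂_a φ(s,a)` by parts
over `[0,s)` cancels the source and absorption terms and leaves `∫ e^{-s} ∂_a φ(s,s) ds`. The two
sides then differ by `∫_0^∞ (d/dt)(e^{-t} φ(t,t)) dt = -φ(0,0)`.
-/

open MeasureTheory Real

/-- The measure `p_t = e^{−t} δ_t + e^{−a} 1_{[0,t)}(a) da` on `ℝ`. -/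
noncomputable def p (t : ℝ) : Measure ℝ :=
  (ENNReal.ofReal (Real.exp (-t))) • Measure.dirac t +
    volume.withDensity
      (Set.indicator (Set.Ico (0 : ℝ) t) (fun a => ENNReal.ofReal (Real.exp (-a))))

open Set

theorem HasCompactSupport.comp_of_fst_eq {X Y M : Type*} [TopologicalSpace X] [TopologicalSpace Y]
    [T2Space X] [Zero M] {G : X × Y → M} (hG : HasCompactSupport G) {γ : X → X × Y}
    (hγ : ∀ x, (γ x).1 = x) : HasCompactSupport (G ∘ γ) :=
  HasCompactSupport.intro (hG.isCompact.image continuous_fst) fun x hx =>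
    image_eq_zero_of_notMem_tsupport (f := G) fun hγx => hx ⟨γ x, hγx, hγ x⟩

theorem integral_p {f : ℝ → ℝ} (hf : Continuous f) (t : ℝ) :
    ∫ a, f a ∂(p t) = exp (-t) * f t + ∫ a in Ico 0 t, exp (-a) * f a := by
  have hmeas : Measurable fun a : ℝ => ENNReal.ofReal (exp (-a)) := by fun_prop
  have hfin : ∀ᵐ a ∂(volume.restrict (Ico (0 : ℝ) t)), ENNReal.ofReal (exp (-a)) < ⊤ :=
    ae_of_all _ fun _ => ENNReal.ofReal_lt_top
  have hdens : Integrable f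
      ((volume.restrict (Ico 0 t)).withDensity fun a => ENNReal.ofReal (exp (-a))) := by
    rw [integrable_withDensity_iff_integrable_smul' hmeas hfin]
    simp only [ENNReal.toReal_ofReal (exp_pos _).le, smul_eq_mul]
    exact (Continuous.integrableOn_Icc (by fun_prop)).mono_set Ico_subset_Icc_self
  have hdirac : Integrable f (Measure.dirac t) := integrable_dirac enorm_lt_top
  rw [p, withDensity_indicator measurableSet_Ico,
    integral_add_measure (hdirac.smul_measure ENNReal.ofReal_ne_top) hdens, integral_smul_measure,
    integral_dirac, integral_withDensity_eq_integral_toReal_smul hmeas hfin]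
  simp only [ENNReal.toReal_ofReal (exp_pos _).le, smul_eq_mul]

section Triangle

variable {E : Type*} [NormedAddCommGroup E] [NormedSpace ℝ E] {F : ℝ × ℝ → E}

def triangle : Set (ℝ × ℝ) := {x | 0 ≤ x.2 ∧ x.2 < x.1}

@[simp] theorem mem_triangle {x : ℝ × ℝ} : x ∈ triangle ↔ 0 ≤ x.2 ∧ x.2 < x.1 := Iff.rfl

theorem measurableSet_triangle : MeasurableSet triangle :=
  (measurableSet_le measurable_const measurable_snd).inter
    (measurableSet_lt measurable_snd measurable_fst)

theorem integral_Ico_eq_integral_indicator_triangle (t : ℝ) :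
    ∫ a in Ico 0 t, F (t, a) = ∫ a, triangle.indicator F (t, a) :=
  (integral_indicator measurableSet_Ico).symm

theorem integrable_integral_Ico (hF : Integrable F) :
    Integrable fun t => ∫ a in Ico 0 t, F (t, a) := by
  simp only [integral_Ico_eq_integral_indicator_triangle]
  rw [Measure.volume_eq_prod] at hF
  exact (hF.indicator measurableSet_triangle).integral_prod_left

theorem integral_Ioi_integral_Ico (hF : Integrable F) :
    ∫ t in Ioi 0, ∫ a in Ico 0 t, F (t, a) = ∫ a in Ici 0, ∫ t in Ioi a, F (t, a) := by
  rw [Measure.volume_eq_prod] at hF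
  have h_snd (a : ℝ) : ∫ t, triangle.indicator F (t, a) =
      (Ici 0).indicator (fun a => ∫ t in Ioi a, F (t, a)) a := by
    by_cases ha : 0 ≤ a
    · rw [indicator_of_mem (mem_Ici.2 ha), ← integral_indicator measurableSet_Ioi]
      congr with t
      simp only [indicator, mem_triangle, mem_Ioi, ha, true_and]
    · simp [ha]
  calc ∫ t in Ioi 0, ∫ a in Ico 0 t, F (t, a) = ∫ t, ∫ a in Ico 0 t, F (t, a) :=
        setIntegral_eq_integral_of_forall_compl_eq_zero fun t ht => by
          rw [Ico_eq_empty (by simpa using ht), Measure.restrict_empty, integral_zero_measure]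
    _ = ∫ t, ∫ a, triangle.indicator F (t, a) := by
        simp only [integral_Ico_eq_integral_indicator_triangle]
    _ = ∫ a, ∫ t, triangle.indicator F (t, a) :=
        integral_integral_swap (hF.indicator measurableSet_triangle)
    _ = ∫ a in Ici 0, ∫ t in Ioi a, F (t, a) := by
        simp only [h_snd, integral_indicator measurableSet_Ici]

end Triangle

theorem HasDerivAt.exp_neg_mul {g : ℝ → ℝ} {g' x : ℝ} (hg : HasDerivAt g g' x) :
    HasDerivAt (fun t => Real.exp (-t) * g t) (Real.exp (-x) * (g' - g x)) x :=
  ((hasDerivAt_neg' (x := x)).exp.mul hg).congr_deriv (by ring)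

theorem integrable_exp_neg_mul_comp_diag {G : ℝ × ℝ → ℝ} (hG : Continuous G)
    (hGs : HasCompactSupport G) : Integrable fun t => exp (-t) * G (t, t) :=
  (by fun_prop : Continuous fun t => exp (-t) * G (t, t)).integrable_of_hasCompactSupport
    (hGs.comp_of_fst_eq fun _ => rfl).mul_left

theorem integrable_integral_p {g : ℝ × ℝ → ℝ} (hg : Continuous g) (hgs : HasCompactSupport g) :
    Integrable fun t => ∫ a, g (t, a) ∂(p t) := by
  simp only [fun t => integral_p (f := fun a => g (t, a)) (by fun_prop) t]
  exact (integrable_exp_neg_mul_comp_diag hg hgs).add <| integrable_integral_Ico <|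
    (by fun_prop : Continuous fun x : ℝ × ℝ => exp (-x.2) * g x).integrable_of_hasCompactSupport
      hgs.mul_left

theorem ContDiff.continuous_fderiv_apply_const {E F : Type*} [NormedAddCommGroup E]
    [NormedSpace ℝ E] [NormedAddCommGroup F] [NormedSpace ℝ F] {f : E → F} (hf : ContDiff ℝ 1 f)
    (v : E) : Continuous fun x => fderiv ℝ f x v :=
  (hf.continuous_fderiv one_ne_zero).clm_apply continuous_const

section PartialDerivatives

variable {φ : ℝ × ℝ → ℝ}

theorem hasDerivAt_comp_prodMk_const (hφ : Differentiable ℝ φ) (t a : ℝ) :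
    HasDerivAt (fun s => φ (s, a)) (fderiv ℝ φ (t, a) (1, 0)) t :=
  (hφ (t, a)).hasFDerivAt.comp_hasDerivAt t ((hasDerivAt_id t).prodMk (hasDerivAt_const t a))

theorem hasDerivAt_comp_const_prodMk (hφ : Differentiable ℝ φ) (t a : ℝ) :
    HasDerivAt (fun b => φ (t, b)) (fderiv ℝ φ (t, a) (0, 1)) a :=
  (hφ (t, a)).hasFDerivAt.comp_hasDerivAt a ((hasDerivAt_const a t).prodMk (hasDerivAt_id a))

theorem hasDerivAt_comp_diag (hφ : Differentiable ℝ φ) (t : ℝ) :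
    HasDerivAt (fun s => φ (s, s)) (fderiv ℝ φ (t, t) (1, 0) + fderiv ℝ φ (t, t) (0, 1)) t := by
  rw [← map_add, Prod.mk_add_mk, add_zero, zero_add]
  exact (hφ (t, t)).hasFDerivAt.comp_hasDerivAt (f := fun s => (s, s)) t
    ((hasDerivAt_id t).prodMk (hasDerivAt_id t))

theorem setIntegral_Ioi_integral_p_fderiv_fst (hφ : ContDiff ℝ 1 φ) (hsupp : HasCompactSupport φ) :
    ∫ t in Ioi 0, ∫ a, fderiv ℝ φ (t, a) (1, 0) ∂(p t) =
      ∫ t in Ioi 0, exp (-t) * (fderiv ℝ φ (t, t) (1, 0) - φ (t, t)) := by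
  have hc := hφ.continuous_fderiv_apply_const (1, 0)
  have hs := hsupp.fderiv_apply ℝ ((1, 0) : ℝ × ℝ)
  have hF : Integrable fun x : ℝ × ℝ => exp (-x.2) * fderiv ℝ φ x (1, 0) :=
    (by fun_prop : Continuous _).integrable_of_hasCompactSupport hs.mul_left
  have hFTC (a : ℝ) : ∫ t in Ioi a, fderiv ℝ φ (t, a) (1, 0) = -φ (a, a) := by
    simpa only [fun t => (hasDerivAt_comp_prodMk_const (hφ.differentiable one_ne_zero) t a).deriv]
      using HasCompactSupport.integral_Ioi_deriv_eq (f := fun t => φ (t, a)) (by fun_prop)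
        (hsupp.comp_of_fst_eq fun _ => rfl) a
  calc ∫ t in Ioi 0, ∫ a, fderiv ℝ φ (t, a) (1, 0) ∂(p t)
      = ∫ t in Ioi 0, (exp (-t) * fderiv ℝ φ (t, t) (1, 0) +
          ∫ a in Ico 0 t, exp (-a) * fderiv ℝ φ (t, a) (1, 0)) := by
        simp only [fun t => integral_p (f := fun a => fderiv ℝ φ (t, a) (1, 0)) (by fun_prop) t]
    _ = (∫ t in Ioi 0, exp (-t) * fderiv ℝ φ (t, t) (1, 0)) +
          ∫ a in Ici 0, exp (-a) * ∫ t in Ioi a, fderiv ℝ φ (t, a) (1, 0) := by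
        rw [integral_add (integrable_exp_neg_mul_comp_diag hc hs).integrableOn
          (integrable_integral_Ico hF).integrableOn, integral_Ioi_integral_Ico hF]
        simp only [integral_const_mul]
    _ = ∫ t in Ioi 0, exp (-t) * (fderiv ℝ φ (t, t) (1, 0) - φ (t, t)) := by
        simp only [hFTC, integral_Ici_eq_integral_Ioi, mul_sub, mul_neg, integral_neg]
        rw [integral_sub (integrable_exp_neg_mul_comp_diag hc hs).integrableOn
          (integrable_exp_neg_mul_comp_diag hφ.continuous hsupp).integrableOn, sub_eq_add_neg]

theorem integral_p_fderiv_snd_add_sub_integral_p (hφ : ContDiff ℝ 1 φ) {s : ℝ} (hs : 0 ≤ s) :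
    ∫ a, fderiv ℝ φ (s, a) (0, 1) ∂(p s) + (φ (s, 0) - ∫ a, φ (s, a) ∂(p s)) =
      exp (-s) * fderiv ℝ φ (s, s) (0, 1) := by
  have hint {f : ℝ → ℝ} (hf : Continuous f) : IntegrableOn f (Ico 0 s) :=
    hf.integrableOn_Icc.mono_set Ico_subset_Icc_self
  have hIBP : (∫ a in Ico 0 s, exp (-a) * fderiv ℝ φ (s, a) (0, 1)) -
      ∫ a in Ico 0 s, exp (-a) * φ (s, a) = exp (-s) * φ (s, s) - φ (s, 0) := by
    rw [← integral_sub (hint (f := fun a => exp (-a) * fderiv ℝ φ (s, a) (0, 1)) (by fun_prop))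
        (hint (f := fun a => exp (-a) * φ (s, a)) (by fun_prop)), integral_Ico_eq_integral_Ioc,
      ← intervalIntegral.integral_of_le hs]
    simp only [← mul_sub]
    rw [intervalIntegral.integral_eq_sub_of_hasDerivAt
        (fun a _ => (hasDerivAt_comp_const_prodMk (hφ.differentiable one_ne_zero) s a).exp_neg_mul)
        (Continuous.intervalIntegrable (by fun_prop) _ _)]
    simp
  rw [integral_p (by fun_prop), integral_p (by fun_prop)]
  linarith

theorem setIntegral_Ioi_integral_p_fderiv_snd_add (hφ : ContDiff ℝ 1 φ)
    (hsupp : HasCompactSupport φ) :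
    (∫ s in Ioi 0, ∫ a, fderiv ℝ φ (s, a) (0, 1) ∂(p s)) +
      ∫ s in Ioi 0, (φ (s, 0) - ∫ a, φ (s, a) ∂(p s)) =
        ∫ s in Ioi 0, exp (-s) * fderiv ℝ φ (s, s) (0, 1) := by
  have hφ₀ : Integrable fun s => φ (s, 0) :=
    (by fun_prop : Continuous fun s => φ (s, 0)).integrable_of_hasCompactSupport
      (hsupp.comp_of_fst_eq fun _ => rfl)
  have hp₂ : Integrable fun s => ∫ a, fderiv ℝ φ (s, a) (0, 1) ∂(p s) :=
    integrable_integral_p (hφ.continuous_fderiv_apply_const _) (hsupp.fderiv_apply ℝ _)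
  have hpφ : Integrable fun s => φ (s, 0) - ∫ a, φ (s, a) ∂(p s) :=
    hφ₀.sub (integrable_integral_p hφ.continuous hsupp)
  rw [← integral_add hp₂.integrableOn hpφ.integrableOn]
  exact setIntegral_congr_fun measurableSet_Ioi fun s hs =>
    integral_p_fderiv_snd_add_sub_integral_p hφ (le_of_lt hs)

theorem setIntegral_Ioi_exp_neg_mul_diag (hφ : ContDiff ℝ 1 φ) (hsupp : HasCompactSupport φ) :
    (∫ t in Ioi 0, exp (-t) * (fderiv ℝ φ (t, t) (1, 0) - φ (t, t))) +
      ∫ t in Ioi 0, exp (-t) * fderiv ℝ φ (t, t) (0, 1) = -φ (0, 0) := by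
  have h₁ : Integrable fun t => exp (-t) * (fderiv ℝ φ (t, t) (1, 0) - φ (t, t)) :=
    integrable_exp_neg_mul_comp_diag ((hφ.continuous_fderiv_apply_const _).sub hφ.continuous)
      ((hsupp.fderiv_apply ℝ _).sub hsupp)
  have h₂ : Integrable fun t => exp (-t) * fderiv ℝ φ (t, t) (0, 1) :=
    integrable_exp_neg_mul_comp_diag (hφ.continuous_fderiv_apply_const _) (hsupp.fderiv_apply ℝ _)
  have hderiv (t : ℝ) : deriv (fun t => exp (-t) * φ (t, t)) t =
      exp (-t) * (fderiv ℝ φ (t, t) (1, 0) - φ (t, t)) + exp (-t) * fderiv ℝ φ (t, t) (0, 1) := by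
    rw [(hasDerivAt_comp_diag (hφ.differentiable one_ne_zero) t).exp_neg_mul.deriv]
    ring
  have hψ : HasCompactSupport fun t => exp (-t) * φ (t, t) :=
    (hsupp.comp_of_fst_eq (γ := fun t => (t, t)) fun _ => rfl).mul_left
  rw [← integral_add h₁.integrableOn h₂.integrableOn]
  simpa only [hderiv, neg_zero, exp_zero, one_mul] using
    hψ.integral_Ioi_deriv_eq (by fun_prop) 0

end PartialDerivatives

theorem stmt_17 (φ : ℝ × ℝ → ℝ) (hφ : ContDiff ℝ 1 φ) (hsupp : HasCompactSupport φ) :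
    -(∫ t in Set.Ioi (0 : ℝ), ∫ a, deriv (fun s => φ (s, a)) t ∂(p t)) =
      φ (0, 0) + (∫ s in Set.Ioi (0 : ℝ), ∫ a, deriv (fun b => φ (s, b)) a ∂(p s)) +
        ∫ s in Set.Ioi (0 : ℝ), (φ (s, 0) - ∫ a, φ (s, a) ∂(p s)) := by
  have hd := hφ.differentiable one_ne_zero
  simp only [fun t a => (hasDerivAt_comp_prodMk_const hd t a).deriv,
    fun s a => (hasDerivAt_comp_const_prodMk hd s a).deriv]
  rw [setIntegral_Ioi_integral_p_fderiv_fst hφ hsupp, add_assoc,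
    setIntegral_Ioi_integral_p_fderiv_snd_add hφ hsupp]
  linarith [setIntegral_Ioi_exp_neg_mul_diag hφ hsupp]
end
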